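/- arXiv:2305.07919 — 2 statements merged into one kernel-verified Lean document; each statement's English description precedes it below -/
import Mathlib

section
/- For d ≥ 3, there is no unitary d×d matrix of the form αX + βZ with complex coefficients α, β, unless it is a scalar multiple of X or of Z (i.e., no nontrivial linear combination of only X and Z is unitary for d ≥ 3). -/
open Complex Finset Matrix

/-- The root of unity `ω = exp(2πi/d)`. -/
noncomputable def omega (d : ℕ) : ℂ := Complex.exp (2 * Real.pi * Complex.I / d)

/-- The Heisenberg-Weyl operator `Z = ∑_k ω^k |k⟩⟨k|`. -/
noncomputable def HWZ (d : ℕ) : Matrix (Fin d) (Fin d) ℂ :=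
  Matrix.diagonal (fun k => omega d ^ (k : ℕ))

/-- The Heisenberg-Weyl operator `X = ∑_k |k+1 mod d⟩⟨k|`. -/
def HWX (d : ℕ) [NeZero d] : Matrix (Fin d) (Fin d) ℂ :=
  Matrix.of (fun i j => if i = j + 1 then 1 else 0)

/-- For `d ≥ 3` there is no unitary matrix of the form `αX + βZ` with both
coefficients nonzero. -/
theorem stmt_3 (d : ℕ) [NeZero d] (hd : 3 ≤ d) (α β : ℂ) (hα : α ≠ 0) (hβ : β ≠ 0) :
    ¬ (α • HWX d + β • HWZ d) ∈ Matrix.unitaryGroup (Fin d) ℂ := by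
  intro hmem
  rw [Matrix.mem_unitaryGroup_iff'] at hmem
  set A := α • HWX d + β • HWZ d with hA
  let j0 : Fin d := ⟨0, by omega⟩
  let j1 : Fin d := ⟨1, by omega⟩
  have h10 : j1 = j0 + 1 := by
    apply Fin.ext
    simp [Fin.val_add, j0, j1, Nat.mod_eq_of_lt (by omega : 1 < d)]
  have h01 : j0 ≠ j1 := by simp [Fin.ext_iff, j0, j1]
  have h11 : j1 ≠ j1 + 1 := by
    simp [Fin.ext_iff, Fin.val_add, j1, Nat.mod_eq_of_lt (by omega : 2 < d)]; omega
  have h012 : j0 ≠ j1 + 1 := by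
    simp [Fin.ext_iff, Fin.val_add, j0, j1, Nat.mod_eq_of_lt (by omega : 2 < d)]
  have hAij : ∀ i j : Fin d, A i j =
      α * (if i = j + 1 then 1 else 0) + β * (if i = j then omega d ^ (j : ℕ) else 0) := by
    intro i j
    simp [hA, HWX, HWZ, Matrix.diagonal_apply, Matrix.add_apply]
    rcases eq_or_ne i j with h | h <;> simp [h]
  have key : (star A * A) j0 j1 = 0 := by
    rw [hmem]
    exact Matrix.one_apply_ne h01
  rw [Matrix.mul_apply] at key
  have hsum : ∑ i, (star A) j0 i * A i j1 = (starRingEnd ℂ) α * (β * omega d ^ 1) := by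
    rw [Finset.sum_eq_single j1]
    · have : (star A) j0 j1 = (starRingEnd ℂ) (A j1 j0) := rfl
      rw [this, hAij, hAij]
      rw [if_pos h10, if_neg (Ne.symm h01), if_neg h11, if_pos rfl]
      ring_nf
      simp [j1]
    · intro i _ hi
      have : (star A) j0 i = (starRingEnd ℂ) (A i j0) := rfl
      rw [this, hAij, hAij]
      rcases eq_or_ne i j0 with h | h
      · subst h
        rw [if_neg h012, if_neg h01]
        ring
      · rw [if_neg (by rw [← h10]; exact hi), if_neg h]
        simp
    · intro h
      simp at h
  rw [hsum] at key
  have hω : omega d ≠ 0 := Complex.exp_ne_zero _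
  have : (starRingEnd ℂ) α ≠ 0 := by simpa using hα
  simp [this, hβ, hω] at key
end

section
/- Let T = ∑_{k=0}^{d-1} α_k Z X^k with α_k = (1/d) ∑_{l=0}^{d-1} ω^{lk} e^{iφ_l} for real phases φ_0, …, φ_{d-1}. Then T is unitary. -/
open Complex Finset Matrix

/-- The coefficients `α_k = (1/d) ∑_{l=0}^{d-1} ω^{lk} e^{iφ_l}`. -/
noncomputable def alphaCoef (d : ℕ) (φ : ℕ → ℝ) (k : ℕ) : ℂ :=
  (1 / d) * ∑ l ∈ Finset.range d, omega d ^ (l * k) * Complex.exp (Complex.I * φ l)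

/-- The operator `T = ∑_{k=0}^{d-1} α_k Z X^k`. -/
noncomputable def Tgate (d : ℕ) [NeZero d] (φ : ℕ → ℝ) : Matrix (Fin d) (Fin d) ℂ :=
  ∑ k ∈ Finset.range d, alphaCoef d φ k • (HWZ d * HWX d ^ k)
open Fin.NatCast Fin.CommRing
section helpers
variable (d : ℕ) [NeZero d]

lemma omega_pow_d : omega d ^ d = 1 :=
  (Complex.isPrimitiveRoot_exp d (NeZero.ne d)).pow_eq_one

lemma conj_omega_mul : (starRingEnd ℂ) (omega d) * omega d = 1 := by
  unfold omega
  rw [← Complex.exp_conj, ← Complex.exp_add]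
  have : (starRingEnd ℂ) (2 * ↑Real.pi * Complex.I / ↑d) = -(2 * ↑Real.pi * Complex.I / ↑d) := by
    simp [map_div₀, Complex.conj_ofNat]
    ring
  rw [this, neg_add_cancel, Complex.exp_zero]

lemma conj_omega_pow_d : ((starRingEnd ℂ) (omega d)) ^ d = 1 := by
  rw [← map_pow, omega_pow_d]; exact map_one (starRingEnd ℂ)

lemma Xpow_apply (k : ℕ) (i j : Fin d) :
    (HWX d ^ k) i j = if i = j + (k : Fin d) then 1 else 0 := by
  induction k generalizing i j with
  | zero => simp [Matrix.one_apply]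
  | succ k ih =>
      rw [pow_succ, Matrix.mul_apply]
      have hX : ∀ m j : Fin d, HWX d m j = if m = j + 1 then 1 else 0 := fun m j => rfl
      simp only [hX, mul_ite, mul_one, mul_zero, Finset.sum_ite_eq', Finset.mem_univ,
        if_true, ih]
      have : ((k + 1 : ℕ) : Fin d) = (k : Fin d) + 1 := by push_cast; ring
      rw [this]
      congr 1
      rw [eq_iff_iff]
      constructor <;> intro h <;> rw [h] <;> ring

end helpers
section helpers2
variable (d : ℕ) [NeZero d]

lemma geom_root (z : ℂ) (hz : z ^ d = 1) :
    ∑ m ∈ Finset.range d, z ^ m = if z = 1 then (d : ℂ) else 0 := by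
  split_ifs with h
  · simp [h]
  · have h2 := geom_sum_mul z d
    rw [hz, sub_self] at h2
    rcases mul_eq_zero.mp h2 with h1 | h1
    · exact h1
    · exact absurd (sub_eq_zero.mp h1) h

lemma pow_congr_mod (x : ℂ) (hx : x ^ d = 1) {a b : ℕ} (h : a % d = b % d) :
    x ^ a = x ^ b := by
  rw [pow_eq_pow_mod a hx, pow_eq_pow_mod b hx, h]

lemma val_sub_add (m i : Fin d) : ((m - i).val + i.val) % d = m.val := by
  have h : (m - i) + i = m := sub_add_cancel m i
  have := congrArg Fin.val h
  rwa [Fin.add_def] at this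

lemma Tgate_apply (φ : ℕ → ℝ) (i j : Fin d) :
    Tgate d φ i j = alphaCoef d φ ((i - j : Fin d) : ℕ) * omega d ^ (i : ℕ) := by
  have hZX : ∀ k : ℕ, (HWZ d * HWX d ^ k) i j
      = if i = j + (k : Fin d) then omega d ^ (i : ℕ) else 0 := by
    intro k
    rw [HWZ, Matrix.diagonal_mul, Xpow_apply]
    split_ifs <;> simp
  rw [Tgate]
  rw [Matrix.sum_apply]
  simp only [Matrix.smul_apply, hZX, smul_ite, smul_eq_mul, mul_zero, smul_zero]
  rw [Finset.sum_eq_single ((i - j : Fin d) : ℕ)]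
  · have h0 : (((i - j : Fin d) : ℕ) : Fin d) = i - j := Fin.cast_val_eq_self _
    rw [h0, if_pos (by ring : i = j + (i - j))]
  · intro k hk hne
    have hc : ¬ (i = j + (k : Fin d)) := by
      intro hc
      apply hne
      have hkk : ((k : Fin d) : ℕ) = k := Fin.val_cast_of_lt (Finset.mem_range.mp hk)
      rw [← hkk]
      congr 1
      rw [← sub_eq_iff_eq_add'] at hc
      rw [← hc]
    rw [if_neg hc, mul_zero]
  · intro h
    exact absurd (Finset.mem_range.mpr (Fin.is_lt _)) h

end helpers2
section main
variable (d : ℕ) [NeZero d]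

lemma key_sum (φ : ℕ → ℝ) (i j : Fin d) :
    ∑ m : Fin d, (starRingEnd ℂ) (Tgate d φ m i) * Tgate d φ m j
      = if i = j then 1 else 0 := by
  set ω := omega d with hωdef
  set c := (starRingEnd ℂ) ω with hcdef
  have hcω : c * ω = 1 := conj_omega_mul d
  have hωc : ω * c = 1 := by rw [mul_comm]; exact hcω
  have hωd : ω ^ d = 1 := omega_pow_d d
  have hcd : c ^ d = 1 := conj_omega_pow_d d
  have hprim : IsPrimitiveRoot ω d := Complex.isPrimitiveRoot_exp d (NeZero.ne d)
  set β : ℕ → ℂ := fun l => Complex.exp (Complex.I * φ l) with hβdef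
  have hβc : ∀ l, (starRingEnd ℂ) (β l) * β l = 1 := by
    intro l
    rw [hβdef]
    simp only
    rw [← Complex.exp_conj, ← Complex.exp_add]
    have h : (starRingEnd ℂ) (Complex.I * (φ l : ℂ)) = -(Complex.I * (φ l : ℂ)) := by
      simp [Complex.conj_I]
    rw [h, neg_add_cancel, Complex.exp_zero]
  -- shift lemmas
  have hshift1 : ∀ (l : ℕ) (m : Fin d),
      c ^ (l * ((m - i : Fin d) : ℕ)) = c ^ (l * (m : ℕ)) * ω ^ (l * (i : ℕ)) := by
    intro l m
    have h1 : c ^ (l * ((m - i : Fin d) : ℕ)) * c ^ (l * (i : ℕ)) = c ^ (l * (m : ℕ)) := by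
      rw [← pow_add]
      apply pow_congr_mod d c hcd
      rw [← mul_add]
      have h2 : (((m - i : Fin d) : ℕ) + (i : ℕ)) % d = (m : ℕ) % d := by
        rw [val_sub_add d m i, Nat.mod_eq_of_lt m.is_lt]
      exact Nat.ModEq.mul_left l h2
    calc c ^ (l * ((m - i : Fin d) : ℕ))
        = c ^ (l * ((m - i : Fin d) : ℕ)) * (c ^ (l * (i : ℕ)) * ω ^ (l * (i : ℕ))) := by
          rw [← mul_pow, hcω, one_pow, mul_one]
      _ = (c ^ (l * ((m - i : Fin d) : ℕ)) * c ^ (l * (i : ℕ))) * ω ^ (l * (i : ℕ)) := by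
          ring
      _ = c ^ (l * (m : ℕ)) * ω ^ (l * (i : ℕ)) := by rw [h1]
  have hshift2 : ∀ (l : ℕ) (m : Fin d),
      ω ^ (l * ((m - j : Fin d) : ℕ)) = ω ^ (l * (m : ℕ)) * c ^ (l * (j : ℕ)) := by
    intro l m
    have h1 : ω ^ (l * ((m - j : Fin d) : ℕ)) * ω ^ (l * (j : ℕ)) = ω ^ (l * (m : ℕ)) := by
      rw [← pow_add]
      apply pow_congr_mod d ω hωd
      rw [← mul_add]
      have h2 : (((m - j : Fin d) : ℕ) + (j : ℕ)) % d = (m : ℕ) % d := by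
        rw [val_sub_add d m j, Nat.mod_eq_of_lt m.is_lt]
      exact Nat.ModEq.mul_left l h2
    calc ω ^ (l * ((m - j : Fin d) : ℕ))
        = ω ^ (l * ((m - j : Fin d) : ℕ)) * (ω ^ (l * (j : ℕ)) * c ^ (l * (j : ℕ))) := by
          rw [← mul_pow, hωc, one_pow, mul_one]
      _ = (ω ^ (l * ((m - j : Fin d) : ℕ)) * ω ^ (l * (j : ℕ))) * c ^ (l * (j : ℕ)) := by
          ring
      _ = ω ^ (l * (m : ℕ)) * c ^ (l * (j : ℕ)) := by rw [h1]
  -- conj alpha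
  have hconjA : ∀ a : ℕ, (starRingEnd ℂ) (alphaCoef d φ a)
      = (1 / (d : ℂ)) * ∑ l ∈ Finset.range d, c ^ (l * a) * (starRingEnd ℂ) (β l) := by
    intro a
    rw [alphaCoef, _root_.map_mul, map_sum]
    congr 1
    · simp
    · apply Finset.sum_congr rfl
      intro l _
      rw [_root_.map_mul, _root_.map_pow]
  -- step 1
  have step1 : ∀ m : Fin d, (starRingEnd ℂ) (Tgate d φ m i) * Tgate d φ m j
      = (starRingEnd ℂ) (alphaCoef d φ ((m - i : Fin d) : ℕ))
        * alphaCoef d φ ((m - j : Fin d) : ℕ) := by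
    intro m
    rw [Tgate_apply, Tgate_apply, _root_.map_mul, _root_.map_pow]
    calc (starRingEnd ℂ) (alphaCoef d φ ((m - i : Fin d) : ℕ)) * c ^ (m : ℕ)
          * (alphaCoef d φ ((m - j : Fin d) : ℕ) * ω ^ (m : ℕ))
        = (starRingEnd ℂ) (alphaCoef d φ ((m - i : Fin d) : ℕ))
            * alphaCoef d φ ((m - j : Fin d) : ℕ) * (c * ω) ^ (m : ℕ) := by
          rw [mul_pow]; ring
      _ = _ := by rw [hcω, one_pow, mul_one]
  -- step 2
  have step2 : ∀ m : Fin d, (starRingEnd ℂ) (alphaCoef d φ ((m - i : Fin d) : ℕ))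
        * alphaCoef d φ ((m - j : Fin d) : ℕ)
      = (1 / (d : ℂ)) * (1 / (d : ℂ)) * ∑ l ∈ Finset.range d, ∑ l' ∈ Finset.range d,
          ((starRingEnd ℂ) (β l) * β l' * (ω ^ (l * (i : ℕ)) * c ^ (l' * (j : ℕ))))
            * (c ^ l * ω ^ l') ^ (m : ℕ) := by
    intro m
    rw [hconjA, alphaCoef, mul_mul_mul_comm, Finset.sum_mul_sum]
    congr 1
    apply Finset.sum_congr rfl
    intro l _
    apply Finset.sum_congr rfl
    intro l' _
    rw [hshift1 l m, hshift2 l' m]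
    ring
  -- assemble
  have hd0 : (d : ℂ) ≠ 0 := Nat.cast_ne_zero.mpr (NeZero.ne d)
  calc ∑ m : Fin d, (starRingEnd ℂ) (Tgate d φ m i) * Tgate d φ m j
      = ∑ m : Fin d, (1 / (d : ℂ)) * (1 / (d : ℂ)) * ∑ l ∈ Finset.range d,
          ∑ l' ∈ Finset.range d,
          ((starRingEnd ℂ) (β l) * β l' * (ω ^ (l * (i : ℕ)) * c ^ (l' * (j : ℕ))))
            * (c ^ l * ω ^ l') ^ (m : ℕ) := by
        apply Finset.sum_congr rfl
        intro m _
        rw [step1 m, step2 m]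
    _ = (1 / (d : ℂ)) * (1 / (d : ℂ)) * ∑ m : Fin d, ∑ l ∈ Finset.range d,
          ∑ l' ∈ Finset.range d,
          ((starRingEnd ℂ) (β l) * β l' * (ω ^ (l * (i : ℕ)) * c ^ (l' * (j : ℕ))))
            * (c ^ l * ω ^ l') ^ (m : ℕ) := by
        rw [← Finset.mul_sum]
    _ = (1 / (d : ℂ)) * (1 / (d : ℂ)) * ∑ l ∈ Finset.range d,
          ∑ l' ∈ Finset.range d, ∑ m : Fin d,
          ((starRingEnd ℂ) (β l) * β l' * (ω ^ (l * (i : ℕ)) * c ^ (l' * (j : ℕ))))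
            * (c ^ l * ω ^ l') ^ (m : ℕ) := by
        rw [Finset.sum_comm]
        congr 1
        apply Finset.sum_congr rfl
        intro l _
        rw [Finset.sum_comm]
    _ = (1 / (d : ℂ)) * (1 / (d : ℂ)) * ∑ l ∈ Finset.range d,
          ((ω ^ ((i : ℕ)) * c ^ ((j : ℕ))) ^ l * (d : ℂ)) := by
        congr 1
        apply Finset.sum_congr rfl
        intro l hl
        have hl' : l < d := Finset.mem_range.mp hl
        -- evaluate inner double sum over l' and m
        have hinner : ∀ l' : ℕ, ∑ m : Fin d,
            ((starRingEnd ℂ) (β l) * β l' * (ω ^ (l * (i : ℕ)) * c ^ (l' * (j : ℕ))))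
              * (c ^ l * ω ^ l') ^ (m : ℕ)
            = ((starRingEnd ℂ) (β l) * β l' * (ω ^ (l * (i : ℕ)) * c ^ (l' * (j : ℕ))))
              * ∑ m ∈ Finset.range d, (c ^ l * ω ^ l') ^ m := by
          intro l'
          rw [← Finset.mul_sum, ← Fin.sum_univ_eq_sum_range (fun n => (c ^ l * ω ^ l') ^ n) d]
        have hz : ∀ l' : ℕ, (c ^ l * ω ^ l') ^ d = 1 := by
          intro l'
          rw [mul_pow, ← pow_mul, ← pow_mul, mul_comm l d, mul_comm l' d,
            pow_mul, pow_mul, hcd, hωd, one_pow, one_pow, one_mul]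
        have hz1 : ∀ l' : ℕ, l' < d → ((c ^ l * ω ^ l' = 1) ↔ l' = l) := by
          intro l' hl''
          constructor
          · intro h
            apply hprim.pow_inj hl'' hl'
            calc ω ^ l' = (c ^ l * ω ^ l') * ω ^ l := by
                  rw [mul_comm (c ^ l) (ω ^ l'), mul_assoc, ← mul_pow, hcω, one_pow, mul_one]
              _ = ω ^ l := by rw [h, one_mul]
          · intro h
            rw [h, ← mul_pow, hcω, one_pow]
        calc ∑ l' ∈ Finset.range d, ∑ m : Fin d,
              ((starRingEnd ℂ) (β l) * β l' * (ω ^ (l * (i : ℕ)) * c ^ (l' * (j : ℕ))))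
                * (c ^ l * ω ^ l') ^ (m : ℕ)
            = ∑ l' ∈ Finset.range d, if l' = l then
                ((starRingEnd ℂ) (β l) * β l' * (ω ^ (l * (i : ℕ)) * c ^ (l' * (j : ℕ))))
                  * (d : ℂ) else 0 := by
              apply Finset.sum_congr rfl
              intro l' hl2
              rw [hinner l', geom_root d _ (hz l')]
              by_cases hll : l' = l
              · rw [if_pos ((hz1 l' (Finset.mem_range.mp hl2)).mpr hll), if_pos hll]
              · rw [if_neg (fun h => hll ((hz1 l' (Finset.mem_range.mp hl2)).mp h)),
                  if_neg hll, mul_zero]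
          _ = ((starRingEnd ℂ) (β l) * β l * (ω ^ (l * (i : ℕ)) * c ^ (l * (j : ℕ))))
                * (d : ℂ) := by
              rw [Finset.sum_ite_eq' (Finset.range d) l]
              rw [if_pos (Finset.mem_range.mpr hl')]
          _ = (ω ^ ((i : ℕ)) * c ^ ((j : ℕ))) ^ l * (d : ℂ) := by
              rw [hβc l, one_mul]
              congr 1
              rw [mul_pow, ← pow_mul, ← pow_mul, mul_comm (i : ℕ) l, mul_comm (j : ℕ) l]
    _ = if i = j then 1 else 0 := by
        rw [← Finset.sum_mul,
          geom_root d _ (by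
            rw [mul_pow, ← pow_mul, ← pow_mul, mul_comm (i : ℕ) d, mul_comm (j : ℕ) d,
              pow_mul, pow_mul, hωd, hcd, one_pow, one_pow, one_mul] :
            (ω ^ ((i : ℕ)) * c ^ ((j : ℕ))) ^ d = 1)]
        have hcond : (ω ^ ((i : ℕ)) * c ^ ((j : ℕ)) = 1) ↔ i = j := by
          constructor
          · intro h
            apply Fin.ext
            apply hprim.pow_inj i.is_lt j.is_lt
            calc ω ^ (i : ℕ) = (ω ^ (i : ℕ) * c ^ (j : ℕ)) * ω ^ (j : ℕ) := by
                  rw [mul_assoc, ← mul_pow, hcω, one_pow, mul_one]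
              _ = ω ^ (j : ℕ) := by rw [h, one_mul]
          · intro h
            rw [h, ← mul_pow, hωc, one_pow]
        by_cases hij : i = j
        · rw [if_pos (hcond.mpr hij), if_pos hij]
          field_simp
        · rw [if_neg (fun h => hij (hcond.mp h)), if_neg hij]; ring

end main

/-- `T` is unitary. -/
theorem stmt_4 (d : ℕ) [NeZero d] (φ : ℕ → ℝ) :
    (Tgate d φ)ᴴ * Tgate d φ = 1 ∧ Tgate d φ * (Tgate d φ)ᴴ = 1 := by
  have h1 : (Tgate d φ)ᴴ * Tgate d φ = 1 := by
    ext i j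
    rw [Matrix.mul_apply, Matrix.one_apply]
    simp only [Matrix.conjTranspose_apply]
    exact key_sum d φ i j
  exact ⟨h1, mul_eq_one_comm.mp h1⟩
end
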